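/- Consequently, ML(⊆) is closed under classical substitutions: if Γ ⊨ φ (team-semantic entailment) and σ is a classical substitution, then {σ(γ) : γ ∈ Γ} ⊨ σ(φ). -/

import Mathlib

structure KModel (W : Type) where
  R : W → W → Prop
  V : ℕ → Set W

inductive MF : Type
  | prop : ℕ → MF
  | bot : MF
  | neg : MF → MF
  | or : MF → MF → MF
  | and : MF → MF → MF
  | dia : MF → MF
  | box : MF → MF

def MF.top : MF := MF.neg MF.bot

def wSat {W : Type} (M : KModel W) : W → MF → Prop
  | w, .prop p => w ∈ M.V p
  | _, .bot => False
  | w, .neg a => ¬ wSat M w a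
  | w, .or a b => wSat M w a ∨ wSat M w b
  | w, .and a b => wSat M w a ∧ wSat M w b
  | w, .dia a => ∃ v, M.R w v ∧ wSat M v a
  | w, .box a => ∀ v, M.R w v → wSat M v a

inductive IncForm : Type
  | prop : ℕ → IncForm
  | bot : IncForm
  | incl : List MF → List MF → IncForm
  | neg : MF → IncForm
  | or : IncForm → IncForm → IncForm
  | and : IncForm → IncForm → IncForm
  | dia : IncForm → IncForm
  | box : IncForm → IncForm

/-- image R[T] -/
def img {W : Type} (M : KModel W) (T : Set W) : Set W := {v | ∃ w ∈ T, M.R w v}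

/-- successor team relation: S ⊆ R[T] and T ⊆ R⁻¹[S] -/
def succTeam {W : Type} (M : KModel W) (T S : Set W) : Prop :=
  (∀ v ∈ S, ∃ w ∈ T, M.R w v) ∧ (∀ w ∈ T, ∃ v ∈ S, M.R w v)

def TSat {W : Type} (M : KModel W) : Set W → IncForm → Prop
  | T, .prop p => T ⊆ M.V p
  | T, .bot => T = ∅
  | T, .incl as bs => ∀ w ∈ T, ∃ v ∈ T, ∀ i, ∀ (h1 : i < as.length) (h2 : i < bs.length),
      (wSat M w (as.get ⟨i, h1⟩) ↔ wSat M v (bs.get ⟨i, h2⟩))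
  | T, .neg a => ∀ w ∈ T, ¬ wSat M w a
  | T, .or f g => ∃ T1 T2, T1 ∪ T2 = T ∧ TSat M T1 f ∧ TSat M T2 g
  | T, .and f g => TSat M T f ∧ TSat M T g
  | T, .dia f => ∃ S, succTeam M T S ∧ TSat M S f
  | T, .box f => TSat M (img M T) f

/-- embedding of classical formulas into ML(⊆) -/
def toInc : MF → IncForm
  | .prop p => .prop p
  | .bot => .bot
  | .neg a => .neg a
  | .or a b => .or (toInc a) (toInc b)
  | .and a b => .and (toInc a) (toInc b)
  | .dia a => .dia (toInc a)
  | .box a => .box (toInc a)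

/-- translate a Boolean constant to ⊤ or ⊥ -/
def ofBool : Bool → MF := fun x => if x then MF.top else MF.bot

/-- α^⊤ = α, α^⊥ = ¬α -/
def signed : Bool → MF → MF := fun x a => if x then a else a.neg

/-- a^x = α₁^{x₁} ∧ ... ∧ αₙ^{xₙ} -/
def conjSigned (xs : List Bool) (as : List MF) : MF :=
  (List.zipWith signed xs as).foldr MF.and MF.top

/-- substitution on classical formulas -/
def MF.subst (σ : ℕ → MF) : MF → MF
  | .prop p => σ p
  | .bot => .bot
  | .neg a => .neg (a.subst σ)
  | .or a b => .or (a.subst σ) (b.subst σ)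
  | .and a b => .and (a.subst σ) (b.subst σ)
  | .dia a => .dia (a.subst σ)
  | .box a => .box (a.subst σ)

/-- (classical) substitution on ML(⊆) formulas, commuting with all connectives
and inclusion atoms -/
def IncForm.subst (σ : ℕ → MF) : IncForm → IncForm
  | .prop p => toInc (σ p)
  | .bot => .bot
  | .incl as bs => .incl (as.map (MF.subst σ)) (bs.map (MF.subst σ))
  | .neg a => .neg (a.subst σ)
  | .or f g => .or (f.subst σ) (g.subst σ)
  | .and f g => .and (f.subst σ) (g.subst σ)
  | .dia f => .dia (f.subst σ)
  | .box f => .box (f.subst σ)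

def Msub {W : Type} (M : KModel W) (σ : ℕ → MF) : KModel W :=
  ⟨M.R, fun p => {w | wSat M w (σ p)}⟩

lemma wSat_subst {W : Type} (M : KModel W) (σ : ℕ → MF) (a : MF) (w : W) :
    wSat M w (a.subst σ) ↔ wSat (Msub M σ) w a := by
  induction a generalizing w with
  | prop p => rfl
  | bot => rfl
  | neg a ih => simp [MF.subst, wSat, ih]
  | or a b iha ihb => simp [MF.subst, wSat, iha, ihb]
  | and a b iha ihb => simp [MF.subst, wSat, iha, ihb]
  | dia a ih => simp [MF.subst, wSat, ih]; rfl
  | box a ih => simp [MF.subst, wSat, ih]; rfl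

lemma flat {W : Type} (M : KModel W) (a : MF) (T : Set W) :
    TSat M T (toInc a) ↔ ∀ w ∈ T, wSat M w a := by
  induction a generalizing T with
  | prop p => exact Iff.rfl
  | bot =>
    simp only [toInc, TSat, wSat]
    constructor
    · rintro rfl w hw; exact hw
    · intro h; ext w; simp only [Set.mem_empty_iff_false, iff_false]; exact h w
  | neg a => exact Iff.rfl
  | or a b iha ihb =>
    simp only [toInc, TSat, wSat]
    constructor
    · rintro ⟨T1, T2, rfl, h1, h2⟩ w hw
      rcases hw with hw | hw
      · exact Or.inl ((iha T1).mp h1 w hw)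
      · exact Or.inr ((ihb T2).mp h2 w hw)
    · intro h
      refine ⟨{w ∈ T | wSat M w a}, {w ∈ T | wSat M w b}, ?_, ?_, ?_⟩
      · ext w
        constructor
        · rintro (⟨hw, _⟩ | ⟨hw, _⟩) <;> exact hw
        · intro hw; rcases h w hw with h' | h'
          · exact Or.inl ⟨hw, h'⟩
          · exact Or.inr ⟨hw, h'⟩
      · exact (iha _).mpr fun w hw => hw.2
      · exact (ihb _).mpr fun w hw => hw.2
  | and a b iha ihb =>
    simp only [toInc, TSat, wSat, iha, ihb]
    constructor
    · rintro ⟨h1, h2⟩ w hw; exact ⟨h1 w hw, h2 w hw⟩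
    · intro h; exact ⟨fun w hw => (h w hw).1, fun w hw => (h w hw).2⟩
  | dia a ih =>
    simp only [toInc, TSat, wSat]
    constructor
    · rintro ⟨S, ⟨_, hTS⟩, hS⟩ w hw
      obtain ⟨v, hv, hr⟩ := hTS w hw
      exact ⟨v, hr, (ih S).mp hS v hv⟩
    · intro h
      refine ⟨{v | (∃ w ∈ T, M.R w v) ∧ wSat M v a}, ⟨?_, ?_⟩, ?_⟩
      · intro v hv; exact hv.1
      · intro w hw; obtain ⟨v, hr, ha⟩ := h w hw
        exact ⟨v, ⟨⟨w, hw, hr⟩, ha⟩, hr⟩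
      · exact (ih _).mpr fun v hv => hv.2
  | box a ih =>
    simp only [toInc, TSat, wSat, ih]
    constructor
    · rintro h w hw v hr; exact h v ⟨w, hw, hr⟩
    · rintro h v ⟨w, hw, hr⟩; exact h w hw v hr

lemma TSat_subst {W : Type} (M : KModel W) (σ : ℕ → MF) (f : IncForm) (T : Set W) :
    TSat M T (f.subst σ) ↔ TSat (Msub M σ) T f := by
  induction f generalizing T with
  | prop p =>
    show TSat M T (toInc (σ p)) ↔ T ⊆ {w | wSat M w (σ p)}
    rw [flat]; rfl
  | bot => exact Iff.rfl
  | incl as bs =>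
    show TSat M T (.incl (as.map _) (bs.map _)) ↔ _
    simp only [TSat]
    constructor
    · intro h w hw
      obtain ⟨v, hv, hvi⟩ := h w hw
      refine ⟨v, hv, fun i h1 h2 => ?_⟩
      have := hvi i (by simpa using h1) (by simpa using h2)
      rw [List.get_eq_getElem, List.get_eq_getElem, List.getElem_map, List.getElem_map, wSat_subst, wSat_subst] at this
      exact this
    · intro h w hw
      obtain ⟨v, hv, hvi⟩ := h w hw
      refine ⟨v, hv, fun i h1 h2 => ?_⟩
      rw [List.get_eq_getElem, List.get_eq_getElem, List.getElem_map, List.getElem_map, wSat_subst, wSat_subst]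
      exact hvi i (by simpa using h1) (by simpa using h2)
  | neg a =>
    show (∀ w ∈ T, ¬ wSat M w (a.subst σ)) ↔ (∀ w ∈ T, ¬ wSat (Msub M σ) w a)
    simp only [wSat_subst]
  | or f g ihf ihg =>
    simp only [IncForm.subst, TSat, ihf, ihg]
  | and f g ihf ihg =>
    simp only [IncForm.subst, TSat, ihf, ihg]
  | dia f ih =>
    simp only [IncForm.subst, TSat, ih]; rfl
  | box f ih =>
    simp only [IncForm.subst, TSat, ih]; rfl

theorem stmt18 (Γ : Set IncForm) (φ : IncForm) (σ : ℕ → MF)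
    (h : ∀ (W : Type) (M : KModel W) (T : Set W),
      (∀ γ ∈ Γ, TSat M T γ) → TSat M T φ) :
    ∀ (W : Type) (M : KModel W) (T : Set W),
      (∀ γ ∈ Γ, TSat M T (γ.subst σ)) → TSat M T (φ.subst σ) := by
  intro W M T hΓ
  rw [TSat_subst]
  exact h W (Msub M σ) T fun γ hγ => (TSat_subst M σ γ T).mp (hΓ γ hγ)
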